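/- In the setting of the main theorem (X real Hilbert space, U closed subspace, g proper lsc convex, T = Id − P_U + Prox_g ∘ R_U, v = P_{closure(U − dom g)}(0) = P_{closure(ran(Id−T))}(0) ∈ U^⊥, 0 ∈ U^⊥ + dom g*, Z ≠ ∅, P_Z weak-to-weak continuous), set T̃ = Id − Prox_g + P_U ∘ (2 Prox_g − Id) and assume P_{closure(ran(Id − T̃))}(0) = −v. Let x ∈ X and let y(·) be given by y(w) = lim_{n→∞} P_F(nv + T^n w), where F = {z : z = T(z + v)}. Then: (i) P_U T̃^n = P_U T^n R_U for every n ∈ ℕ; (ii) T̃^n x − T̃^{n+1} x = Prox_g T̃^n x − 2 P_U Prox_g T̃^n x + P_U T̃^n x = P_U T̃^n x − R_U Prox_g T̃^n x → −v; (iii) P_U T̃^n x − P_U Prox_g T̃^n x → 0; (iv) P_U T̃^n x converges weakly to P_U y(R_U x), which is a minimizer of g(· − v) over U; (v) Prox_g T̃^n x converges weakly to P_U y(R_U x) − v ∈ dom g. -/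

import Mathlib

open scoped RealInnerProductSpace Pointwise
open Filter Topology

noncomputable section

variable {X : Type*}

section Defs
variable [NormedAddCommGroup X] [InnerProductSpace ℝ X]

/-- `p` is the metric projection of `x` onto `S`: `p ∈ S` and
`⟪s − p, x − p⟫ ≤ 0` for all `s ∈ S`. -/
def IsMetricProj (S : Set X) (x p : X) : Prop :=
  p ∈ S ∧ ∀ s ∈ S, ⟪s - p, x - p⟫ ≤ (0 : ℝ)

/-- a function `X → (−∞,+∞]` is proper: never `−∞` and somewhere finite. -/
def EProper (g : X → EReal) : Prop :=
  (∀ x, g x ≠ ⊥) ∧ ∃ x, g x ≠ ⊤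

/-- convexity for extended-real-valued functions. -/
def EConvexOn (g : X → EReal) : Prop :=
  ∀ x y : X, ∀ a b : ℝ, 0 ≤ a → 0 ≤ b → a + b = 1 →
    g (a • x + b • y) ≤ (a : EReal) * g x + (b : EReal) * g y

/-- the convex subdifferential `∂g(x)`. -/
def ESubdiff (g : X → EReal) (x : X) : Set X :=
  {xs | ∀ z : X, g x + ((⟪z - x, xs⟫ : ℝ) : EReal) ≤ g z}

/-- the Fenchel conjugate `g*`. -/
def EConj (g : X → EReal) (xs : X) : EReal :=
  ⨆ x : X, ((⟪x, xs⟫ : ℝ) : EReal) - g x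

/-- `prox` is the proximal mapping of `g`: `prox x` minimizes
`y ↦ g y + ‖y − x‖²/2`. -/
def IsProx (g : X → EReal) (prox : X → X) : Prop :=
  ∀ x y : X,
    g (prox x) + ((‖prox x - x‖ ^ 2 / 2 : ℝ) : EReal) ≤
      g y + ((‖y - x‖ ^ 2 / 2 : ℝ) : EReal)

/-- the normal cone operator of a closed linear subspace:
`N_U(x) = U^⊥` if `x ∈ U`, and `∅` otherwise. -/
def normalCone (U : Submodule ℝ X) (x : X) : Set X :=
  {u | x ∈ U ∧ u ∈ Uᗮ}

/-- `c` is a weak cluster point of the sequence `s`, i.e. the weak limit of a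
subsequence of `s`. -/
def IsWeakClusterPt (s : ℕ → X) (c : X) : Prop :=
  ∃ φ : ℕ → ℕ, StrictMono φ ∧
    ∀ w : X, Tendsto (fun k => (⟪s (φ k), w⟫ : ℝ)) atTop (𝓝 ⟪c, w⟫)

end Defs

/-!
`T̃ = R_U ∘ T ∘ R_U`, so `T̃ⁿ x` is read off from the orbit of `T` at `w = R_U x`, and (i) and
(ii) are algebra. Since `Id - T` is firmly nonexpansive, the shifted orbit `n • v + Tⁿ w` is Fejér
monotone with respect to every fixed point of `T (· + v)`: the drift `n • v` only helps, because
every displacement `z - T z` has component at least `‖v‖²` along `v`. Hence `Tⁿ w - Tⁿ⁺¹ w → v`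
and the shifted orbit is bounded, which gives the limits in (ii) and (iii).

For (iv) and (v), let `c` be a weak cluster point of the shadows `P_U Tⁿ w`. Then
`Prox_g R_U Tⁿ w = P_U Tⁿ w - (Tⁿ w - Tⁿ⁺¹ w)` converges weakly to `c - v` along the same
ultrafilter, and the subgradient inequality at these points together with weak lower
semicontinuity of `g` shows that `c - v` minimizes `g` on `U - v`. Every such minimizer yields a
point of `F`, and the variational inequality of `P_F` along `n • v + Tⁿ w` then forces
`c = P_U y`.
-/

section ConvexAnalysis

variable [NormedAddCommGroup X] {g : X → EReal} {prox : X → X} {x y u : X}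

namespace IsProx

theorem ne_top (hg : EProper g) (hprox : IsProx g prox) (q : X) : g (prox q) ≠ ⊤ := by
  obtain ⟨y, hy⟩ := hg.2
  intro h
  have := hprox q y
  rw [h, EReal.top_add_of_ne_bot (EReal.coe_ne_bot _), ← EReal.coe_toReal hy (hg.1 y),
    ← EReal.coe_add, top_le_iff] at this
  exact EReal.coe_ne_top _ this

theorem toReal_add_le (hg : EProper g) (hprox : IsProx g prox) (q : X) (hy : g y ≠ ⊤) :
    (g (prox q)).toReal + ‖prox q - q‖ ^ 2 / 2 ≤ (g y).toReal + ‖y - q‖ ^ 2 / 2 := by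
  have := hprox q y
  rw [← EReal.coe_toReal (hprox.ne_top hg q) (hg.1 _), ← EReal.coe_toReal hy (hg.1 y),
    ← EReal.coe_add, ← EReal.coe_add] at this
  exact_mod_cast this

end IsProx

variable [InnerProductSpace ℝ X]

namespace ESubdiff

theorem ne_top (hg : EProper g) (hu : u ∈ ESubdiff g x) : g x ≠ ⊤ := by
  obtain ⟨y, hy⟩ := hg.2
  intro hx
  have := hu y
  rw [hx, EReal.top_add_of_ne_bot (EReal.coe_ne_bot _), top_le_iff] at this
  exact hy this

theorem toReal_add_inner_le (hg : EProper g) (hu : u ∈ ESubdiff g x) (hy : g y ≠ ⊤) :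
    (g x).toReal + ⟪y - x, u⟫ ≤ (g y).toReal := by
  have := hu y
  rw [← EReal.coe_toReal (ne_top hg hu) (hg.1 x), ← EReal.coe_toReal hy (hg.1 y),
    ← EReal.coe_add] at this
  exact_mod_cast this

theorem of_toReal_add_inner_le (hg : EProper g) (hx : g x ≠ ⊤)
    (h : ∀ y, g y ≠ ⊤ → (g x).toReal + ⟪y - x, u⟫ ≤ (g y).toReal) : u ∈ ESubdiff g x := by
  intro y
  by_cases hy : g y = ⊤
  · rw [hy]; exact le_top
  · rw [← EReal.coe_toReal hx (hg.1 x), ← EReal.coe_toReal hy (hg.1 y), ← EReal.coe_add]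
    exact_mod_cast h y hy

theorem inner_sub_sub_nonneg (hg : EProper g) {x₁ x₂ u₁ u₂ : X} (h₁ : u₁ ∈ ESubdiff g x₁)
    (h₂ : u₂ ∈ ESubdiff g x₂) : 0 ≤ ⟪x₁ - x₂, u₁ - u₂⟫ := by
  have a₁ := toReal_add_inner_le hg h₁ (ne_top hg h₂)
  have a₂ := toReal_add_inner_le hg h₂ (ne_top hg h₁)
  rw [← neg_sub x₁ x₂, inner_neg_left] at a₁
  rw [inner_sub_right]
  linarith

theorem le_of_inner_eq_zero (hu : u ∈ ESubdiff g x) (h : ⟪y - x, u⟫ = 0) : g x ≤ g y := by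
  simpa [h] using hu y

theorem of_le_of_inner_eq_zero (hu : u ∈ ESubdiff g x) (hle : g y ≤ g x)
    (h : ⟪x - y, u⟫ = 0) : u ∈ ESubdiff g y := fun z => by
  have : ⟪z - y, u⟫ = ⟪z - x, u⟫ := by
    rw [← sub_add_sub_cancel z x y, inner_add_left, h, add_zero]
  rw [this]
  exact (add_le_add_left hle _).trans (hu z)

end ESubdiff

theorem EConvexOn.le_toReal_combo (hc : EConvexOn g) (hg : EProper g) (hx : g x ≠ ⊤)
    (hy : g y ≠ ⊤) {a b : ℝ} (ha : 0 ≤ a) (hb : 0 ≤ b) (hab : a + b = 1) :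
    g (a • x + b • y) ≤ ((a * (g x).toReal + b * (g y).toReal : ℝ) : EReal) := by
  rw [EReal.coe_add, EReal.coe_mul, EReal.coe_mul, EReal.coe_toReal hx (hg.1 x),
    EReal.coe_toReal hy (hg.1 y)]
  exact hc x y a b ha hb hab

theorem EConvexOn.convex_le (hc : EConvexOn g) (hg : EProper g) (r : ℝ) :
    Convex ℝ {x | g x ≤ r} := by
  intro x hx y hy a b ha hb hab
  have toReal_le {z : X} (hz : g z ≤ r) : (g z).toReal ≤ r :=
    EReal.toReal_le_toReal hz (hg.1 z) (EReal.coe_ne_top r) |>.trans_eq (EReal.toReal_coe r)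
  have ne_top {z : X} (hz : g z ≤ r) : g z ≠ ⊤ := ne_top_of_le_ne_top (EReal.coe_ne_top r) hz
  refine (hc.le_toReal_combo hg (ne_top hx) (ne_top hy) ha hb hab).trans
    (EReal.coe_le_coe_iff.2 ?_)
  calc a * (g x).toReal + b * (g y).toReal ≤ a * r + b * r := by
        gcongr
        exacts [toReal_le hx, toReal_le hy]
    _ = r := by rw [← add_mul, hab, one_mul]

namespace IsProx

/-- Compare `prox q` with the points of the segment from `prox q` to `z`, and let the
segment shrink. -/
theorem sub_mem_ESubdiff (hg : EProper g) (hc : EConvexOn g) (hprox : IsProx g prox) (q : X) :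
    q - prox q ∈ ESubdiff g (prox q) := by
  set p := prox q
  have hp := hprox.ne_top hg q
  refine ESubdiff.of_toReal_add_inner_le hg hp fun z hz => ?_
  have key : ∀ t ∈ Set.Ioc (0 : ℝ) 1,
      (g p).toReal + ⟪z - p, q - p⟫ ≤ (g z).toReal + t * (‖z - p‖ ^ 2 / 2) := by
    rintro t ⟨ht₀, ht₁⟩
    have hconv := hc.le_toReal_combo hg hp hz (sub_nonneg.2 ht₁) ht₀.le (sub_add_cancel 1 t)
    have hmin := hprox.toReal_add_le hg q (ne_top_of_le_ne_top (EReal.coe_ne_top _) hconv)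
    have hconv' := EReal.toReal_le_toReal hconv (hg.1 _) (EReal.coe_ne_top _)
    rw [EReal.toReal_coe] at hconv'
    have hnorm : ‖((1 - t) • p + t • z) - q‖ ^ 2
        = ‖p - q‖ ^ 2 - 2 * t * ⟪z - p, q - p⟫ + t ^ 2 * ‖z - p‖ ^ 2 := by
      rw [show ((1 - t) • p + t • z) - q = (p - q) + t • (z - p) by module, norm_add_sq_real,
        real_inner_smul_right, norm_smul, Real.norm_eq_abs, mul_pow, sq_abs,
        ← neg_sub q p, inner_neg_left, real_inner_comm]
      ring
    have : t * ((g p).toReal + ⟪z - p, q - p⟫) ≤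
        t * ((g z).toReal + t * (‖z - p‖ ^ 2 / 2)) := by
      nlinarith
    exact le_of_mul_le_mul_left this ht₀
  have hlim : Tendsto (fun t : ℝ => (g z).toReal + t * (‖z - p‖ ^ 2 / 2)) (𝓝[>] 0)
      (𝓝 (g z).toReal) :=
    ((continuous_const.add (continuous_id.mul continuous_const)).tendsto' 0 _
      (by simp)).mono_left nhdsWithin_le_nhds
  exact ge_of_tendsto hlim (Filter.mem_of_superset (Ioc_mem_nhdsGT one_pos) key)

theorem eq_iff_sub_mem_ESubdiff (hg : EProper g) (hc : EConvexOn g) (hprox : IsProx g prox)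
    {q p : X} : prox q = p ↔ q - p ∈ ESubdiff g p := by
  refine ⟨fun h => h ▸ hprox.sub_mem_ESubdiff hg hc q, fun h => ?_⟩
  have := ESubdiff.inner_sub_sub_nonneg hg h (hprox.sub_mem_ESubdiff hg hc q)
  rw [sub_sub_sub_cancel_left, ← neg_sub p (prox q), inner_neg_right, real_inner_self_eq_norm_sq,
    neg_nonneg] at this
  exact (sub_eq_zero.1 (norm_eq_zero.1 (by nlinarith [norm_nonneg (p - prox q)]))).symm

end IsProx

def FirmlyNonexpansive (S : X → X) : Prop :=
  ∀ a b, ‖S a - S b‖ ^ 2 ≤ ⟪S a - S b, a - b⟫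

theorem FirmlyNonexpansive.lipschitzWith {S : X → X} (hS : FirmlyNonexpansive S) :
    LipschitzWith 1 S := by
  refine LipschitzWith.of_dist_le_mul fun a b => ?_
  rw [dist_eq_norm, dist_eq_norm, NNReal.coe_one, one_mul]
  have := (hS a b).trans (real_inner_le_norm _ _)
  nlinarith [norm_nonneg (S a - S b), norm_nonneg (a - b)]

theorem IsProx.firmlyNonexpansive (hg : EProper g) (hc : EConvexOn g) (hprox : IsProx g prox) :
    FirmlyNonexpansive prox := fun a b => by
  have := ESubdiff.inner_sub_sub_nonneg hg (hprox.sub_mem_ESubdiff hg hc a)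
    (hprox.sub_mem_ESubdiff hg hc b)
  rw [show a - prox a - (b - prox b) = (a - b) - (prox a - prox b) by abel, inner_sub_right,
    real_inner_self_eq_norm_sq] at this
  linarith

end ConvexAnalysis

section WeakConvergence

variable [NormedAddCommGroup X] [InnerProductSpace ℝ X] {α : Type*}

def WeakTendsto (s : α → X) (l : Filter α) (c : X) : Prop :=
  ∀ w : X, Tendsto (fun n => ⟪s n, w⟫) l (𝓝 ⟪c, w⟫)

theorem Filter.Tendsto.weakTendsto {s : α → X} {l : Filter α} {c : X}
    (h : Tendsto s l (𝓝 c)) : WeakTendsto s l c :=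
  fun _ => h.inner tendsto_const_nhds

namespace WeakTendsto

variable {s t : α → X} {l : Filter α} {c d : X}

theorem sub (hs : WeakTendsto s l c) (ht : WeakTendsto t l d) :
    WeakTendsto (fun n => s n - t n) l (c - d) := fun w => by
  simpa only [inner_sub_left] using (hs w).sub (ht w)

theorem tendsto_inner {M : ℝ} (hs : WeakTendsto s l c) (hM : ∀ n, ‖s n‖ ≤ M)
    (ht : Tendsto t l (𝓝 d)) : Tendsto (fun n => ⟪t n, s n⟫) l (𝓝 ⟪d, c⟫) := by
  have hsmall : Tendsto (fun n => ⟪t n - d, s n⟫) l (𝓝 0) := by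
    refine squeeze_zero_norm (fun n => ?_)
      (by simpa using (tendsto_iff_norm_sub_tendsto_zero.1 ht).mul_const M)
    exact (norm_inner_le_norm _ _).trans (mul_le_mul_of_nonneg_left (hM n) (norm_nonneg _))
  have hsum : Tendsto (fun n => ⟪d, s n⟫ + ⟪t n - d, s n⟫) l (𝓝 (⟪d, c⟫ + 0)) := by
    simpa only [real_inner_comm d] using (hs d).add hsmall
  simpa only [← inner_add_left, add_sub_cancel, add_zero] using hsum

end WeakTendsto

theorem weakTendsto_iff_ultrafilter {s : α → X} {l : Filter α} {c : X} :
    WeakTendsto s l c ↔ ∀ 𝒰 : Ultrafilter α, ↑𝒰 ≤ l → WeakTendsto s 𝒰 c := by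
  simp only [WeakTendsto, tendsto_iff_ultrafilter _ l]
  exact ⟨fun h 𝒰 h𝒰 w => h w 𝒰 h𝒰, fun h w 𝒰 h𝒰 => h 𝒰 h𝒰 w⟩

/-- Banach–Alaoglu, transported to `X` by the Riesz representation. -/
theorem exists_weakTendsto_of_norm_le [CompleteSpace X] (𝒰 : Ultrafilter α) {s : α → X}
    {M : ℝ} (hs : ∀ n, ‖s n‖ ≤ M) : ∃ c, WeakTendsto s 𝒰 c := by
  let φ : α → WeakDual ℝ X := fun n =>
    StrongDual.toWeakDual (InnerProductSpace.toDual ℝ X (s n))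
  have hφ : ∀ n, φ n ∈ WeakDual.toStrongDual ⁻¹' Metric.closedBall 0 M := fun n => by
    simpa [φ] using hs n
  obtain ⟨ψ, -, hψ⟩ :=
    (WeakDual.isCompact_closedBall (0 : StrongDual ℝ X) M).ultrafilter_le_nhds (𝒰.map φ)
      (le_principal_iff.2 (Ultrafilter.mem_map.2 (Filter.univ_mem' hφ)))
  refine ⟨(InnerProductSpace.toDual ℝ X).symm (WeakDual.toStrongDual ψ), fun w => ?_⟩
  rw [InnerProductSpace.toDual_symm_apply]
  exact ((WeakDual.eval_continuous w).tendsto ψ).comp hψ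

/-- Test the weak limit against its displacement from its nearest point in `S`. -/
theorem IsClosed.mem_of_weakTendsto [CompleteSpace X] {S : Set X} (hS : IsClosed S)
    (hconv : Convex ℝ S) {l : Filter α} [l.NeBot] {s : α → X} {c : X} (hs : WeakTendsto s l c)
    (hmem : ∀ᶠ n in l, s n ∈ S) : c ∈ S := by
  obtain ⟨n, hn⟩ := hmem.exists
  obtain ⟨p, hpS, hp⟩ := exists_norm_eq_iInf_of_complete_convex ⟨_, hn⟩ hS.isComplete hconv c
  have hvar := (norm_eq_iInf_iff_real_inner_le_zero hconv hpS).1 hp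
  have hlim : Tendsto (fun n => ⟪s n - p, c - p⟫) l (𝓝 ⟪c - p, c - p⟫) := by
    simpa only [inner_sub_left] using (hs (c - p)).sub_const ⟪p, c - p⟫
  have : ⟪c - p, c - p⟫ ≤ 0 :=
    le_of_tendsto hlim (hmem.mono fun n hn => by rw [real_inner_comm]; exact hvar _ hn)
  rwa [sub_eq_zero.1 (inner_self_eq_zero.1 (le_antisymm this real_inner_self_nonneg))]

theorem LowerSemicontinuous.le_of_weakTendsto [CompleteSpace X] {g : X → EReal}
    (hlsc : LowerSemicontinuous g) (hc : EConvexOn g) (hg : EProper g) {l : Filter α} [l.NeBot]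
    {s : α → X} {c : X} (hs : WeakTendsto s l c) {r : ℝ} (h : ∀ᶠ n in l, g (s n) ≤ r) :
    g c ≤ r :=
  (hlsc.isClosed_preimage r).mem_of_weakTendsto (hc.convex_le hg r) hs h

end WeakConvergence

section Displacement

variable [NormedAddCommGroup X] [InnerProductSpace ℝ X] {T : X → X} {v f : X}

theorem IsMetricProj.inner_sub_nonneg_of_zero {S : Set X} (hv : IsMetricProj S 0 v) {z : X}
    (hz : z ∈ S) : 0 ≤ ⟪z - v, v⟫ := by
  have := hv.2 z hz
  rw [zero_sub, inner_neg_right] at this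
  linarith

/-- Fejér monotonicity of the shifted orbit; the drift `a • v` only helps because every
displacement `t - T t` has component at least `‖v‖²` along `v`. -/
theorem norm_add_smul_sub_sq_add_le (hT : FirmlyNonexpansive fun z => z - T z)
    (hv : IsMetricProj (closure (Set.range fun z => z - T z)) 0 v) (hf : f = T (f + v))
    (t : X) {a : ℝ} (ha : 0 ≤ a) :
    ‖(a + 1) • v + T t - f‖ ^ 2 + ‖t - T t - v‖ ^ 2 ≤ ‖a • v + t - f‖ ^ 2 := by
  have hfirm : ‖t - T t - v‖ ^ 2 ≤ ⟪t - T t - v, t - (f + v)⟫ := by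
    simpa only [← hf, add_sub_cancel_left] using hT t (f + v)
  have hD : a • v + t - f = (t - (f + v)) + (a + 1) • v := by module
  have hE : (a + 1) • v + T t - f = (a • v + t - f) - (t - T t - v) := by module
  rw [hE, norm_sub_sq_real, hD, inner_add_left, real_inner_smul_left,
    real_inner_comm (t - T t - v), real_inner_comm (t - T t - v)]
  nlinarith [mul_nonneg (by linarith : 0 ≤ a + 1)
    (hv.inner_sub_nonneg_of_zero (subset_closure ⟨t, rfl⟩))]

theorem norm_smul_add_iterate_sub_sq_add_le (hT : FirmlyNonexpansive fun z => z - T z)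
    (hv : IsMetricProj (closure (Set.range fun z => z - T z)) 0 v) (hf : f = T (f + v))
    (w : X) (n : ℕ) :
    ‖((n + 1 : ℕ) : ℝ) • v + T^[n + 1] w - f‖ ^ 2 + ‖T^[n] w - T^[n + 1] w - v‖ ^ 2 ≤
      ‖(n : ℝ) • v + T^[n] w - f‖ ^ 2 := by
  rw [Function.iterate_succ_apply', Nat.cast_succ]
  exact norm_add_smul_sub_sq_add_le hT hv hf _ n.cast_nonneg

theorem norm_smul_add_iterate_sub_le (hT : FirmlyNonexpansive fun z => z - T z)
    (hv : IsMetricProj (closure (Set.range fun z => z - T z)) 0 v) (hf : f = T (f + v))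
    (w : X) (n : ℕ) : ‖(n : ℝ) • v + T^[n] w - f‖ ≤ ‖w - f‖ := by
  have hanti : Antitone fun n : ℕ => ‖(n : ℝ) • v + T^[n] w - f‖ ^ 2 :=
    antitone_nat_of_succ_le fun n => (le_add_of_nonneg_right (sq_nonneg _)).trans
      (norm_smul_add_iterate_sub_sq_add_le hT hv hf w n)
  have := hanti n.zero_le
  simp only [CharP.cast_eq_zero, zero_smul, zero_add, Function.iterate_zero, id_eq] at this
  exact pow_le_pow_iff_left₀ (norm_nonneg _) (norm_nonneg _) two_ne_zero |>.1 this

theorem tendsto_iterate_sub_iterate_succ (hT : FirmlyNonexpansive fun z => z - T z)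
    (hv : IsMetricProj (closure (Set.range fun z => z - T z)) 0 v) (hf : f = T (f + v))
    (w : X) : Tendsto (fun n => T^[n] w - T^[n + 1] w) atTop (𝓝 v) := by
  set D := fun n : ℕ => ‖(n : ℝ) • v + T^[n] w - f‖ ^ 2
  have hstep := norm_smul_add_iterate_sub_sq_add_le hT hv hf w
  have hanti : Antitone D :=
    antitone_nat_of_succ_le fun n => (le_add_of_nonneg_right (sq_nonneg _)).trans (hstep n)
  obtain ⟨L, hL⟩ : ∃ L, Tendsto D atTop (𝓝 L) :=
    ⟨_, tendsto_atTop_ciInf hanti ⟨0, by rintro _ ⟨n, rfl⟩; positivity⟩⟩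
  have hgap : Tendsto (fun n => D n - D (n + 1)) atTop (𝓝 0) := by
    simpa using hL.sub (hL.comp (tendsto_add_atTop_nat 1))
  have hsq : Tendsto (fun n => ‖T^[n] w - T^[n + 1] w - v‖ ^ 2) atTop (𝓝 0) :=
    squeeze_zero (fun n => by positivity) (fun n => by linarith [hstep n]) hgap
  rw [tendsto_iff_norm_sub_tendsto_zero]
  simpa using hsq.sqrt

end Displacement

section Projection

variable [NormedAddCommGroup X] [InnerProductSpace ℝ X] {U : Submodule ℝ X}
  [U.HasOrthogonalProjection]

theorem Submodule.starProjection_starProjection (z : X) :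
    U.starProjection (U.starProjection z) = U.starProjection z :=
  starProjection_eq_self_iff.2 (U.starProjection_apply_mem z)

theorem Submodule.starProjection_reflection (z : X) :
    U.starProjection (U.reflection z) = U.starProjection z := by
  rw [reflection_apply, map_sub, map_nsmul, starProjection_starProjection, two_nsmul,
    add_sub_cancel_right]

theorem Submodule.starProjection_sub_mem_orthogonal (z : X) : U.starProjection z - z ∈ Uᗮ := by
  rw [← neg_sub]
  exact Uᗮ.neg_mem (U.sub_starProjection_mem_orthogonal z)

end Projection

section DouglasRachford

variable [NormedAddCommGroup X] [InnerProductSpace ℝ X] (U : Submodule ℝ X)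
  [U.HasOrthogonalProjection] (prox : X → X)

def drOperator (z : X) : X := z - U.starProjection z + prox (U.reflection z)

def drOperatorSwitched (z : X) : X := z - prox z + U.starProjection (2 • prox z - z)

variable {U prox} {g : X → EReal} {v f : X}

local notation "T" => drOperator U prox
local notation "T̃" => drOperatorSwitched U prox
local notation "P" => U.starProjection
local notation "R" => U.reflection

theorem reflection_drOperator (z : X) : R (T z) = T̃ (R z) := by
  have hP : P (T z) = P (prox (R z)) := by
    rw [drOperator, map_add, map_sub, U.starProjection_starProjection, sub_self, zero_add]
  rw [U.reflection_apply, hP, drOperatorSwitched, map_sub, map_nsmul,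
    U.starProjection_reflection, drOperator, U.reflection_apply z]
  module

theorem drOperatorSwitched_iterate (n : ℕ) (z : X) : T̃^[n] z = R (T^[n] (R z)) := by
  rw [(Function.Semiconj.iterate_right reflection_drOperator n).eq, U.reflection_reflection]

theorem sub_drOperatorSwitched (z : X) : z - T̃ z = P z - R (prox z) := by
  rw [drOperatorSwitched, map_sub, map_nsmul, U.reflection_apply]
  abel

theorem sub_drOperator (z : X) : z - T z = P z - prox (R z) := by
  rw [drOperator]
  abel

theorem FirmlyNonexpansive.sub_drOperator (hprox : FirmlyNonexpansive prox) :
    FirmlyNonexpansive fun z => z - T z := fun a b => by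
  have hq := hprox (R a) (R b)
  rw [← map_sub, U.reflection_apply (a - b)] at hq
  simp only [_root_.sub_drOperator]
  set q := prox (R a) - prox (R b) with hq_def
  have hP : ⟪P (a - b), a - b⟫ = ‖P (a - b)‖ ^ 2 := by
    rw [← U.starProjection_starProjection (a - b), U.inner_starProjection_left_eq_right,
      U.starProjection_starProjection, real_inner_self_eq_norm_sq]
  rw [show P a - prox (R a) - (P b - prox (R b)) = P (a - b) - q by rw [map_sub, hq_def]; abel,
    norm_sub_sq_real, inner_sub_left, hP, real_inner_comm]
  rw [inner_sub_right, two_nsmul, inner_add_right] at hq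
  linarith

theorem eq_drOperator_add_iff (hg : EProper g) (hc : EConvexOn g) (hprox : IsProx g prox)
    (hvU : v ∈ Uᗮ) : f = T (f + v) ↔ P f - f ∈ ESubdiff g (P f - v) := by
  have hPv : P v = 0 := (U.starProjection_apply_eq_zero_iff).2 hvU
  have hT : T (f + v) - f = prox (R (f + v)) - (P f - v) := by
    rw [drOperator, map_add, hPv, add_zero]
    abel
  have hq : R (f + v) - (P f - v) = P f - f := by
    rw [U.reflection_apply, map_add, hPv, add_zero]
    module
  rw [eq_comm, ← sub_eq_zero, hT, sub_eq_zero, hprox.eq_iff_sub_mem_ESubdiff hg hc, hq]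

theorem le_of_eq_drOperator_add (hg : EProper g) (hc : EConvexOn g) (hprox : IsProx g prox)
    (hvU : v ∈ Uᗮ) (hf : f = T (f + v)) {u : X} (hu : u ∈ U) : g (P f - v) ≤ g (u - v) :=
  ESubdiff.le_of_inner_eq_zero ((eq_drOperator_add_iff hg hc hprox hvU).1 hf) <| by
    rw [sub_sub_sub_cancel_right]
    exact Submodule.inner_right_of_mem_orthogonal (U.sub_mem hu (U.starProjection_apply_mem f))
      (U.starProjection_sub_mem_orthogonal f)

theorem eq_drOperator_add_of_le (hg : EProper g) (hc : EConvexOn g) (hprox : IsProx g prox)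
    (hvU : v ∈ Uᗮ) (hf : f = T (f + v)) {c : X} (hcU : c ∈ U) (hle : g (c - v) ≤ g (P f - v)) :
    c + (f - P f) = T (c + (f - P f) + v) := by
  have hP : P (c + (f - P f)) = c := by
    rw [map_add, map_sub, U.starProjection_starProjection, sub_self, add_zero,
      U.starProjection_eq_self_iff.2 hcU]
  rw [eq_drOperator_add_iff hg hc hprox hvU, hP, sub_add_eq_sub_sub, sub_self, zero_sub, neg_sub]
  refine ESubdiff.of_le_of_inner_eq_zero ((eq_drOperator_add_iff hg hc hprox hvU).1 hf) hle ?_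
  rw [sub_sub_sub_cancel_right]
  exact Submodule.inner_right_of_mem_orthogonal (U.sub_mem (U.starProjection_apply_mem f) hcU)
    (U.starProjection_sub_mem_orthogonal f)

theorem eq_drOperator_add_of_tendsto (hprox : Continuous prox) {PF : X → X}
    (hPF : ∀ z, IsMetricProj {f | f = T (f + v)} z (PF z)) {z : ℕ → X} {y : X}
    (hy : Tendsto (fun n => PF (z n)) atTop (𝓝 y)) : y = T (y + v) := by
  have hT : Continuous T :=
    (continuous_id.sub U.starProjection.continuous).add (hprox.comp U.reflection.continuous)
  exact (isClosed_eq continuous_id (hT.comp (continuous_id.add continuous_const))).mem_of_tendsto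
    hy (Eventually.of_forall fun n => (hPF (z n)).1)

/-- The subgradient inequality at `prox (R t)`, tested at `c - v`: orthogonality of `U` and `Uᗮ`
kills every term but the displacement one. -/
theorem toReal_prox_reflection_le (hg : EProper g) (hc : EConvexOn g) (hprox : IsProx g prox)
    (hvU : v ∈ Uᗮ) {c : X} (hcU : c ∈ U) (hcv : g (c - v) ≠ ⊤) (t : X) :
    (g (prox (R t))).toReal ≤ (g (c - v)).toReal + ⟪t - T t - v, T t - c⟫ := by
  have h := ESubdiff.toReal_add_inner_le hg (hprox.sub_mem_ESubdiff hg hc (R t)) hcv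
  set s := P t
  set p := prox (R t)
  have hst : ⟪s - c, t - s⟫ = 0 := Submodule.inner_right_of_mem_orthogonal
    (U.sub_mem (U.starProjection_apply_mem t) hcU) (U.sub_starProjection_mem_orthogonal t)
  have hsv : ⟪s - c, v⟫ = 0 := Submodule.inner_right_of_mem_orthogonal
    (U.sub_mem (U.starProjection_apply_mem t) hcU) hvU
  have hT : T t = t - s + p := rfl
  rw [U.reflection_apply, hT] at *
  simp only [inner_sub_left, inner_sub_right, inner_add_left, inner_add_right, two_nsmul]
    at h hst hsv ⊢
  linarith [real_inner_comm s t, real_inner_comm s c, real_inner_comm s p, real_inner_comm p t,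
    real_inner_comm p c, real_inner_comm v t, real_inner_comm v c, real_inner_comm v p,
    real_inner_comm v s, real_inner_comm c t]

theorem eventually_apply_prox_reflection_iterate_le (hg : EProper g) (hc : EConvexOn g)
    (hprox : IsProx g prox) (hvU : v ∈ Uᗮ)
    (hv : IsMetricProj (closure (Set.range fun z => z - T z)) 0 v) (hf : f = T (f + v)) (w : X)
    {r : ℝ} (hr : g (P f - v) < r) : ∀ᶠ n in atTop, g (prox (R (T^[n] w))) ≤ r := by
  set c := P f
  have hcv : g (c - v) ≠ ⊤ := ESubdiff.ne_top hg ((eq_drOperator_add_iff hg hc hprox hvU).1 hf)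
  have hfirm := (hprox.firmlyNonexpansive hg hc).sub_drOperator (U := U)
  set M := ‖w - f‖ + ‖f - c‖
  have hbound (n : ℕ) : (g (prox (R (T^[n] w)))).toReal ≤
      (g (c - v)).toReal + ‖T^[n] w - T^[n + 1] w - v‖ * M := by
    set E := T^[n] w - T^[n + 1] w - v
    have hval := toReal_prox_reflection_le hg hc hprox hvU (U.starProjection_apply_mem f) hcv
      (T^[n] w)
    rw [← Function.iterate_succ_apply' T n w] at hval
    have hEv : 0 ≤ ⟪E, v⟫ := hv.inner_sub_nonneg_of_zero
      (subset_closure ⟨T^[n] w, by rw [Function.iterate_succ_apply']⟩)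
    have hz := norm_smul_add_iterate_sub_le hfirm hv hf w (n + 1)
    have : ⟪E, T^[n + 1] w - c⟫ ≤ ‖E‖ * M := calc
      ⟪E, T^[n + 1] w - c⟫ = ⟪E, ((n + 1 : ℕ) : ℝ) • v + T^[n + 1] w - f + (f - c)⟫ -
          ((n + 1 : ℕ) : ℝ) * ⟪E, v⟫ := by
        rw [show ((n + 1 : ℕ) : ℝ) • v + T^[n + 1] w - f + (f - c) =
          (T^[n + 1] w - c) + ((n + 1 : ℕ) : ℝ) • v by abel, inner_add_right,
          real_inner_smul_right]
        ring
      _ ≤ ⟪E, ((n + 1 : ℕ) : ℝ) • v + T^[n + 1] w - f + (f - c)⟫ :=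
        sub_le_self _ (mul_nonneg (Nat.cast_nonneg _) hEv)
      _ ≤ ‖E‖ * M := (real_inner_le_norm _ _).trans <|
        mul_le_mul_of_nonneg_left ((norm_add_le _ _).trans (add_le_add_left hz _)) (norm_nonneg E)
    linarith
  have hlim : Tendsto (fun n => (g (c - v)).toReal + ‖T^[n] w - T^[n + 1] w - v‖ * M) atTop
      (𝓝 ((g (c - v)).toReal)) := by
    have := tendsto_iff_norm_sub_tendsto_zero.1 (tendsto_iterate_sub_iterate_succ hfirm hv hf w)
    simpa using tendsto_const_nhds.add (this.mul_const M)
  have hr' : (g (c - v)).toReal < r := by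
    rwa [← EReal.coe_toReal hcv (hg.1 _), EReal.coe_lt_coe_iff] at hr
  filter_upwards [hlim.eventually_lt_const hr'] with n hn
  rw [← EReal.coe_toReal (hprox.ne_top hg _) (hg.1 _), EReal.coe_le_coe_iff]
  exact (hbound n).trans hn.le

/-- A point `c ∈ U` on the minimal level of `g (· - v)` yields the point
`c + (PF z - P (PF z))` of `F`, and the variational inequality of `PF` at it only sees the
component in `U`. -/
theorem inner_sub_starProjection_metricProj_nonpos (hg : EProper g) (hc : EConvexOn g)
    (hprox : IsProx g prox) (hvU : v ∈ Uᗮ) {PF : X → X}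
    (hPF : ∀ z, IsMetricProj {f | f = T (f + v)} z (PF z)) (z : X) {c : X} (hcU : c ∈ U)
    (hle : g (c - v) ≤ g (P (PF z) - v)) : ⟪c - P (PF z), P z - P (PF z)⟫ ≤ 0 := by
  have hvar := (hPF z).2 _ (eq_drOperator_add_of_le hg hc hprox hvU (hPF z).1 hcU hle)
  have hdU : c - P (PF z) ∈ U := U.sub_mem hcU (U.starProjection_apply_mem _)
  rwa [show c + (PF z - P (PF z)) - PF z = c - P (PF z) by abel,
    ← U.starProjection_eq_self_iff.2 hdU, U.inner_starProjection_left_eq_right, map_sub] at hvar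

theorem WeakTendsto.prox_reflection_drOperator_iterate (hprox : FirmlyNonexpansive prox)
    (hv : IsMetricProj (closure (Set.range fun z => z - T z)) 0 v) (hf : f = T (f + v))
    {w c : X} {l : Filter ℕ} (hl : l ≤ atTop) (hs : WeakTendsto (fun n => P (T^[n] w)) l c) :
    WeakTendsto (fun n => prox (R (T^[n] w))) l (c - v) := by
  have := hs.sub ((tendsto_iterate_sub_iterate_succ hprox.sub_drOperator hv hf w).mono_left
    hl).weakTendsto
  simpa only [Function.iterate_succ_apply', sub_drOperator, sub_sub_cancel] using this

theorem weakTendsto_starProjection_drOperator_iterate [CompleteSpace X] (hg : EProper g)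
    (hlsc : LowerSemicontinuous g) (hc : EConvexOn g) (hprox : IsProx g prox) (hvU : v ∈ Uᗮ)
    (hv : IsMetricProj (closure (Set.range fun z => z - T z)) 0 v) {PF : X → X}
    (hPF : ∀ z, IsMetricProj {f | f = T (f + v)} z (PF z)) {w y : X}
    (hy : Tendsto (fun n : ℕ => PF ((n : ℝ) • v + T^[n] w)) atTop (𝓝 y)) :
    WeakTendsto (fun n => P (T^[n] w)) atTop (P y) := by
  have hfirm := hprox.firmlyNonexpansive hg hc
  have hyF := eq_drOperator_add_of_tendsto hfirm.lipschitzWith.continuous hPF hy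
  have hPz (n : ℕ) : P ((n : ℝ) • v + T^[n] w) = P (T^[n] w) := by
    rw [map_add, map_smul, (U.starProjection_apply_eq_zero_iff).2 hvU, smul_zero, zero_add]
  have hs (n : ℕ) : ‖P (T^[n] w)‖ ≤ ‖w - y‖ + ‖y‖ := by
    rw [← hPz n]
    refine (U.norm_starProjection_apply_le _).trans ((norm_le_norm_sub_add _ y).trans ?_)
    exact add_le_add_left (norm_smul_add_iterate_sub_le hfirm.sub_drOperator hv hyF w n) _
  refine weakTendsto_iff_ultrafilter.2 fun 𝒰 h𝒰 => ?_
  obtain ⟨c, hsc⟩ := exists_weakTendsto_of_norm_le 𝒰 hs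
  suffices c = P y from this ▸ hsc
  have hcU : c ∈ U := (U.orthogonal_orthogonal ▸ Uᗮ.isClosed_orthogonal).mem_of_weakTendsto
    U.convex hsc (Eventually.of_forall fun n => U.starProjection_apply_mem _)
  have hcmin : g (c - v) ≤ g (P y - v) := EReal.le_of_forall_lt_iff_le.1 fun r hr =>
    hlsc.le_of_weakTendsto hc hg (hsc.prox_reflection_drOperator_iterate hfirm hv hyF h𝒰)
      (h𝒰 (eventually_apply_prox_reflection_iterate_le hg hc hprox hvU hv hyF w hr))
  set p := fun n : ℕ => PF ((n : ℝ) • v + T^[n] w)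
  have hineq (n : ℕ) : ⟪c - P (p n), P (T^[n] w) - P (p n)⟫ ≤ 0 := by
    rw [← hPz n]
    exact inner_sub_starProjection_metricProj_nonpos hg hc hprox hvU hPF _ hcU
      (hcmin.trans (le_of_eq_drOperator_add hg hc hprox hvU hyF (U.starProjection_apply_mem _)))
  have hPf : Tendsto (fun n => P (p n)) 𝒰 (𝓝 (P y)) :=
    ((U.starProjection.continuous.tendsto y).comp hy).mono_left h𝒰
  have hd : Tendsto (fun n => c - P (p n)) 𝒰 (𝓝 (c - P y)) := tendsto_const_nhds.sub hPf
  have hlim := (hsc.tendsto_inner hs hd).sub (hd.inner hPf)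
  simp only [← inner_sub_right] at hlim
  exact sub_eq_zero.1 (inner_self_eq_zero.1
    (le_antisymm (le_of_tendsto hlim (Eventually.of_forall hineq)) real_inner_self_nonneg))

theorem tendsto_drOperatorSwitched_iterate_sub (hprox : FirmlyNonexpansive prox)
    (hvU : v ∈ Uᗮ) (hv : IsMetricProj (closure (Set.range fun z => z - T z)) 0 v)
    (hf : f = T (f + v)) (x : X) : Tendsto (fun n => T̃^[n] x - T̃^[n + 1] x) atTop (𝓝 (-v)) := by
  simp only [drOperatorSwitched_iterate, ← map_sub]
  rw [← U.reflection_mem_subspace_orthogonalComplement_eq_neg hvU]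
  exact (U.reflection.continuous.tendsto v).comp
    (tendsto_iterate_sub_iterate_succ hprox.sub_drOperator hv hf _)

end DouglasRachford

theorem DR_switched_order_general
    [NormedAddCommGroup X] [InnerProductSpace ℝ X] [CompleteSpace X]
    (U : Submodule ℝ X) [U.HasOrthogonalProjection]
    (g : X → EReal) (hgproper : EProper g) (hglsc : LowerSemicontinuous g)
    (hgconv : EConvexOn g)
    (prox : X → X) (hprox : IsProx g prox)
    (PU RU T Ttil : X → X)
    (hPU : ∀ z, PU z = (U.orthogonalProjectionOnto z : X))
    (hRU : ∀ z, RU z = 2 • PU z - z)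
    (hT : ∀ z, T z = z - PU z + prox (RU z))
    (hTtil : ∀ z, Ttil z = z - prox z + PU (2 • prox z - z))
    (v : X)
    (hv : IsMetricProj (closure (Set.range fun z => z - T z)) 0 v)
    (hvU : v ∈ Uᗮ)
    (F : Set X) (hF : F = {z | z = T (z + v)})
    (PF : X → X) (hPF : ∀ w : X, IsMetricProj F w (PF w))
    (x ytil : X)
    (hytil : Tendsto (fun n : ℕ => PF ((n : ℝ) • v + T^[n] (RU x))) atTop (𝓝 ytil)) :
    -- (i)
    (∀ (n : ℕ) (z : X), PU (Ttil^[n] z) = PU (T^[n] (RU z))) ∧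
    -- (ii)
    (∀ n : ℕ,
      Ttil^[n] x - Ttil^[n+1] x =
        prox (Ttil^[n] x) - 2 • PU (prox (Ttil^[n] x)) + PU (Ttil^[n] x) ∧
      Ttil^[n] x - Ttil^[n+1] x = PU (Ttil^[n] x) - RU (prox (Ttil^[n] x))) ∧
    Tendsto (fun n : ℕ => Ttil^[n] x - Ttil^[n+1] x) atTop (𝓝 (-v)) ∧
    -- (iii)
    Tendsto (fun n : ℕ => PU (Ttil^[n] x) - PU (prox (Ttil^[n] x))) atTop (𝓝 0) ∧
    -- (iv)
    (∀ w : X, Tendsto (fun n : ℕ => (⟪PU (Ttil^[n] x), w⟫ : ℝ)) atTop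
      (𝓝 ⟪PU ytil, w⟫)) ∧
    PU ytil ∈ U ∧ (∀ u ∈ U, g (PU ytil - v) ≤ g (u - v)) ∧
    -- (v)
    (∀ w : X, Tendsto (fun n : ℕ => (⟪prox (Ttil^[n] x), w⟫ : ℝ)) atTop
      (𝓝 ⟪PU ytil - v, w⟫)) ∧
    g (PU ytil - v) ≠ ⊤ := by
  obtain rfl : PU = U.starProjection :=
    funext fun z => (hPU z).trans (U.starProjection_apply z).symm
  obtain rfl : RU = U.reflection := funext fun z => (hRU z).trans (U.reflection_apply z).symm
  obtain rfl : T = drOperator U prox := funext hT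
  obtain rfl : Ttil = drOperatorSwitched U prox := funext hTtil
  subst hF
  have hfirm := hprox.firmlyNonexpansive hgproper hgconv
  have hyF := eq_drOperator_add_of_tendsto hfirm.lipschitzWith.continuous hPF hytil
  have hdisp := tendsto_drOperatorSwitched_iterate_sub hfirm hvU hv hyF x
  have hshadow :=
    weakTendsto_starProjection_drOperator_iterate hgproper hglsc hgconv hprox hvU hv hPF hytil
  refine ⟨fun n z => by rw [drOperatorSwitched_iterate, U.starProjection_reflection],
    fun n => ⟨?_, ?_⟩, hdisp, ?_, ?_, U.starProjection_apply_mem _,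
    fun u hu => le_of_eq_drOperator_add hgproper hgconv hprox hvU hyF hu, ?_,
    ESubdiff.ne_top hgproper ((eq_drOperator_add_iff hgproper hgconv hprox hvU).1 hyF)⟩
  · rw [Function.iterate_succ_apply', sub_drOperatorSwitched, U.reflection_apply]
    abel
  · rw [Function.iterate_succ_apply', sub_drOperatorSwitched]
  · have := (U.starProjection.continuous.tendsto _).comp hdisp
    rw [map_neg, (U.starProjection_apply_eq_zero_iff).2 hvU, neg_zero] at this
    refine this.congr fun n => ?_
    simp only [Function.comp_apply, Function.iterate_succ_apply', sub_drOperatorSwitched,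
      map_sub, U.starProjection_starProjection, U.starProjection_reflection]
  · simp only [drOperatorSwitched_iterate, U.starProjection_reflection]
    exact hshadow
  · simp only [drOperatorSwitched_iterate]
    exact hshadow.prox_reflection_drOperator_iterate hfirm hv hyF le_rfl

/-- **switching the order of the operators.** In the setting of the
main theorem, let `T̃ = Id − Prox_g + P_U ∘ (2 Prox_g − Id)` and suppose the
minimal displacement vector of `T̃` is `−v`. Then, with
`y(w) = lim_n P_F(nv + Tⁿw)`:
(i) `P_U T̃ⁿ = P_U Tⁿ R_U`; (ii) `T̃ⁿx − T̃ⁿ⁺¹x = Prox_g T̃ⁿx − 2 P_U Prox_g T̃ⁿx +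
P_U T̃ⁿx = P_U T̃ⁿx − R_U Prox_g T̃ⁿx → −v`; (iii) `P_U T̃ⁿx − P_U Prox_g T̃ⁿx → 0`;
(iv) `P_U T̃ⁿx ⇀ P_U y(R_U x)`, a minimizer of `g(·−v)` over `U`;
(v) `Prox_g T̃ⁿx ⇀ P_U y(R_U x) − v ∈ dom g`. -/
theorem DR_switched_order
    [NormedAddCommGroup X] [InnerProductSpace ℝ X] [CompleteSpace X]
    (U : Submodule ℝ X) (hUclosed : IsClosed (U : Set X)) [U.HasOrthogonalProjection]
    (g : X → EReal) (hgproper : EProper g) (hglsc : LowerSemicontinuous g)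
    (hgconv : EConvexOn g)
    (prox : X → X) (hprox : IsProx g prox)
    (PU RU T Ttil : X → X)
    (hPU : ∀ z, PU z = (U.orthogonalProjectionOnto z : X))
    (hRU : ∀ z, RU z = 2 • PU z - z)
    (hT : ∀ z, T z = z - PU z + prox (RU z))
    (hTtil : ∀ z, Ttil z = z - prox z + PU (2 • prox z - z))
    (v : X)
    (hv : IsMetricProj (closure (Set.range fun z => z - T z)) 0 v)
    (hvgap : IsMetricProj (closure ((U : Set X) - {z | g z ≠ ⊤})) 0 v)
    (hvU : v ∈ Uᗮ)
    (hvtil : IsMetricProj (closure (Set.range fun z => z - Ttil z)) 0 (-v))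
    (hCQ : ∃ u w : X, u ∈ Uᗮ ∧ EConj g w ≠ ⊤ ∧ u + w = 0)
    (Z : Set X)
    (hZ : Z = {z | ∃ a b : X, a ∈ normalCone U z ∧ b ∈ ESubdiff g (z - v) ∧ v = a + b})
    (hZne : Z.Nonempty)
    (PZ : X → X) (hPZ : ∀ w : X, IsMetricProj Z w (PZ w))
    (hPZweak : ∀ (s : ℕ → X) (a : X),
      (∀ w : X, Tendsto (fun n => (⟪s n, w⟫ : ℝ)) atTop (𝓝 ⟪a, w⟫)) →
      ∀ w : X, Tendsto (fun n => (⟪PZ (s n), w⟫ : ℝ)) atTop (𝓝 ⟪PZ a, w⟫))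
    (F : Set X) (hF : F = {z | z = T (z + v)})
    (PF : X → X) (hPF : ∀ w : X, IsMetricProj F w (PF w))
    (x ytil : X)
    (hytil : Tendsto (fun n : ℕ => PF ((n : ℝ) • v + T^[n] (RU x))) atTop (𝓝 ytil)) :
    -- (i)
    (∀ (n : ℕ) (z : X), PU (Ttil^[n] z) = PU (T^[n] (RU z))) ∧
    -- (ii)
    (∀ n : ℕ,
      Ttil^[n] x - Ttil^[n+1] x =
        prox (Ttil^[n] x) - 2 • PU (prox (Ttil^[n] x)) + PU (Ttil^[n] x) ∧
      Ttil^[n] x - Ttil^[n+1] x = PU (Ttil^[n] x) - RU (prox (Ttil^[n] x))) ∧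
    Tendsto (fun n : ℕ => Ttil^[n] x - Ttil^[n+1] x) atTop (𝓝 (-v)) ∧
    -- (iii)
    Tendsto (fun n : ℕ => PU (Ttil^[n] x) - PU (prox (Ttil^[n] x))) atTop (𝓝 0) ∧
    -- (iv)
    (∀ w : X, Tendsto (fun n : ℕ => (⟪PU (Ttil^[n] x), w⟫ : ℝ)) atTop
      (𝓝 ⟪PU ytil, w⟫)) ∧
    PU ytil ∈ U ∧ (∀ u ∈ U, g (PU ytil - v) ≤ g (u - v)) ∧
    -- (v)
    (∀ w : X, Tendsto (fun n : ℕ => (⟪prox (Ttil^[n] x), w⟫ : ℝ)) atTop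
      (𝓝 ⟪PU ytil - v, w⟫)) ∧
    g (PU ytil - v) ≠ ⊤ :=
  DR_switched_order_general U g hgproper hglsc hgconv prox hprox PU RU T Ttil hPU hRU hT hTtil v hv
    hvU F hF PF hPF x ytil hytil
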